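/- For the root system A_l = {ε_i - ε_j : 1 ≤ i ≠ j ≤ l+1} in ℝ^{l+1}, there exists a choice of one root from each antipodal pair {α, -α} whose sum is the zero vector if and only if l is even. -/

import Mathlib

/-- The root system `A_l` in `ℝ^{l+1}`: vectors `ε_i - ε_j` for `i ≠ j`. -/
def rootsA (l : ℕ) : Set (Fin (l + 1) → ℝ) :=
  {v | ∃ i j : Fin (l + 1), i ≠ j ∧ v = Pi.single i 1 - Pi.single j 1}

/-!
Choosing one root out of each pair `±(ε_i - ε_j)` is the same as orienting every edge of the
complete graph on the `l + 1` indices, i.e. choosing a tournament; the chosen roots then sum to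
`∑ i, (outdeg i - indeg i) • ε_i`. Since `outdeg i + indeg i = l`, a vanishing sum forces `l` to
be even. Conversely, for `l` even, the rotational tournament `i → i + d` (`1 ≤ d ≤ l / 2`) on
`ℤ / (l + 1)` has `outdeg = indeg = l / 2` everywhere.
-/

open Finset

section Counting

variable {α β : Type*} [DecidableEq α] [DecidableEq β]

lemma card_filter_fst_eq [Fintype β] (A : Finset (α × β)) (a : α) :
    #{p ∈ A | p.1 = a} = #{b | (a, b) ∈ A} := by
  refine card_nbij' Prod.snd (Prod.mk a) ?_ ?_ ?_ ?_ <;> intro p <;> aesop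

lemma card_filter_snd_eq [Fintype α] (A : Finset (α × β)) (b : β) :
    #{p ∈ A | p.2 = b} = #{a | (a, b) ∈ A} := by
  refine card_nbij' Prod.fst (Prod.mk · b) ?_ ?_ ?_ ?_ <;> intro p <;> aesop

end Counting

variable {ι : Type*} [DecidableEq ι]

def root (p : ι × ι) : ι → ℝ := Pi.single p.1 1 - Pi.single p.2 1

lemma root_apply (p : ι × ι) (k : ι) :
    root p k = (if p.1 = k then 1 else 0) - if p.2 = k then 1 else 0 := by
  simp only [root, Pi.sub_apply, Pi.single_apply, eq_comm]

lemma neg_root (p : ι × ι) : -root p = root p.swap := neg_sub _ _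

lemma root_injOn : Set.InjOn root {p : ι × ι | p.1 ≠ p.2} := by
  rintro ⟨i, j⟩ (hij : i ≠ j) ⟨i', j'⟩ - h
  have hi := congrFun h i
  have hj := congrFun h j
  simp only [root_apply, if_true, if_neg hij, if_neg hij.symm] at hi hj
  have hi' : i' = i := by by_contra hne; rw [if_neg hne] at hi; split_ifs at hi <;> norm_num at hi
  have hj' : j' = j := by by_contra hne; rw [if_neg hne] at hj; split_ifs at hj <;> norm_num at hj
  rw [hi', hj']

lemma mem_image_root_iff [DecidableEq (ι → ℝ)] {A : Finset (ι × ι)} (hA : ∀ p ∈ A, p.1 ≠ p.2)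
    {p : ι × ι} (hp : p.1 ≠ p.2) : root p ∈ A.image root ↔ p ∈ A := by
  refine ⟨fun h => ?_, mem_image_of_mem root⟩
  obtain ⟨q, hq, hqp⟩ := mem_image.mp h
  rwa [← root_injOn (hA q hq) hp hqp]

lemma sum_image_root [DecidableEq (ι → ℝ)] {A : Finset (ι × ι)} (hA : ∀ p ∈ A, p.1 ≠ p.2) :
    ∑ v ∈ A.image root, v = ∑ p ∈ A, root p :=
  sum_image fun p hp q hq h => root_injOn (hA p hp) (hA q hq) h

lemma sum_root_apply [Fintype ι] (A : Finset (ι × ι)) (k : ι) :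
    ∑ p ∈ A, root p k = #{j | (k, j) ∈ A} - #{i | (i, k) ∈ A} := by
  simp only [root_apply, sum_sub_distrib, sum_boole, card_filter_fst_eq, card_filter_snd_eq]

structure IsTournament (A : Finset (ι × ι)) : Prop where
  ne_of_mem : ∀ p ∈ A, p.1 ≠ p.2
  mem_iff_swap_notMem : ∀ p : ι × ι, p.1 ≠ p.2 → (p ∈ A ↔ p.swap ∉ A)

namespace IsTournament

variable [Fintype ι] {A : Finset (ι × ι)}

lemma card_out_add_card_in (hA : IsTournament A) (k : ι) :
    #{j | (k, j) ∈ A} + #{i | (i, k) ∈ A} + 1 = Fintype.card ι := by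
  have hout : ({j | (k, j) ∈ A} : Finset ι) = {j ∈ univ.erase k | (k, j) ∈ A} := by
    ext j
    simp only [mem_filter, mem_univ, true_and, mem_erase, ne_eq, and_true]
    exact ⟨fun h => ⟨(hA.ne_of_mem _ h).symm, h⟩, And.right⟩
  have hin : ({i | (i, k) ∈ A} : Finset ι) = {j ∈ univ.erase k | (k, j) ∉ A} := by
    ext j
    simp only [mem_filter, mem_univ, true_and, mem_erase, ne_eq, and_true]
    exact ⟨fun h => ⟨hA.ne_of_mem _ h, (hA.mem_iff_swap_notMem _ (hA.ne_of_mem _ h)).mp h⟩,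
      fun h => (hA.mem_iff_swap_notMem (j, k) h.1).mpr h.2⟩
  rw [hout, hin, card_filter_add_card_filter_not, card_erase_add_one (mem_univ k), card_univ]

lemma card_eq_two_mul_card_out_add_one (hA : IsTournament A) (hsum : ∑ p ∈ A, root p = 0)
    (k : ι) : Fintype.card ι = 2 * #{j | (k, j) ∈ A} + 1 := by
  have hk := congrFun hsum k
  rw [Finset.sum_apply, sum_root_apply, Pi.zero_apply, sub_eq_zero, Nat.cast_inj] at hk
  have := hA.card_out_add_card_in k
  omega

end IsTournament

section Cayley

variable {G : Type*} [AddCommGroup G] [Fintype G] [DecidableEq G]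

def cayleyArcs (D : Finset G) : Finset (G × G) := {p ∈ univ.offDiag | p.2 - p.1 ∈ D}

lemma mem_cayleyArcs {D : Finset G} {p : G × G} :
    p ∈ cayleyArcs D ↔ p.2 - p.1 ≠ 0 ∧ p.2 - p.1 ∈ D := by
  simp [cayleyArcs, sub_ne_zero, eq_comm]

lemma isTournament_cayleyArcs {D : Finset G} (hD : ∀ g ≠ 0, g ∈ D ↔ -g ∉ D) :
    IsTournament (cayleyArcs D) where
  ne_of_mem p hp := (mem_offDiag.mp (mem_filter.mp hp).1).2.2
  mem_iff_swap_notMem p hp := by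
    simpa [cayleyArcs, hp, hp.symm] using hD (p.2 - p.1) (sub_ne_zero.mpr hp.symm)

lemma sum_root_cayleyArcs (D : Finset G) : ∑ p ∈ cayleyArcs D, root p = 0 := by
  -- The shear `(i, j) ↦ (2i - j, i)` permutes the arcs and turns tails into heads.
  have : ∑ p ∈ cayleyArcs D, (Pi.single p.1 1 : G → ℝ) = ∑ p ∈ cayleyArcs D, Pi.single p.2 1 :=
    sum_nbij' (fun p => (p.1 - (p.2 - p.1), p.1)) (fun q => (q.2, q.2 + (q.2 - q.1)))
      (fun p hp => by simpa [mem_cayleyArcs] using hp)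
      (fun q hq => by simpa [mem_cayleyArcs] using hq)
      (by simp) (by simp) (by simp)
  simp only [root, sum_sub_distrib, this, sub_self]

end Cayley

lemma exists_finset_fin_mem_iff_neg_notMem {l : ℕ} (hl : Even l) :
    ∃ D : Finset (Fin (l + 1)), ∀ g ≠ 0, g ∈ D ↔ -g ∉ D := by
  refine ⟨univ.filter fun g : Fin (l + 1) => (g : ℕ) ≤ l / 2, fun g hg => ?_⟩
  obtain ⟨m, rfl⟩ := hl
  have hg₀ := Fin.pos_iff_ne_zero.mpr hg
  simp only [mem_filter, mem_univ, true_and, Fin.val_neg, hg, ↓reduceIte, tsub_le_iff_right,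
    Order.add_one_le_iff, not_lt]
  omega

theorem exists_half_rootsA_sum_eq_zero_iff (l : ℕ) :
    (∃ S : Finset (Fin (l + 1) → ℝ), (∀ v ∈ S, v ∈ rootsA l) ∧
      (∀ v ∈ rootsA l, (v ∈ S ↔ -v ∉ S)) ∧ ∑ v ∈ S, v = 0) ↔
    ∃ A : Finset (Fin (l + 1) × Fin (l + 1)), IsTournament A ∧ ∑ p ∈ A, root p = 0 := by
  classical
  constructor
  · rintro ⟨S, hroots, hhalf, hsum⟩
    set A : Finset (Fin (l + 1) × Fin (l + 1)) := {p ∈ univ.offDiag | root p ∈ S}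
    have hA : ∀ p ∈ A, p.1 ≠ p.2 := fun p hp => (mem_offDiag.mp (mem_filter.mp hp).1).2.2
    have hSA : S = A.image root := by
      ext v
      refine ⟨fun hv => ?_, fun hv => ?_⟩
      · obtain ⟨i, j, hij, rfl⟩ := hroots v hv
        have : (i, j) ∈ A := mem_filter.mpr ⟨mem_offDiag.mpr ⟨mem_univ _, mem_univ _, hij⟩, hv⟩
        exact mem_image_of_mem root this
      · obtain ⟨p, hp, rfl⟩ := mem_image.mp hv
        exact (mem_filter.mp hp).2
    refine ⟨A, ⟨hA, fun p hp => ?_⟩, by rwa [hSA, sum_image_root hA] at hsum⟩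
    have := hhalf (root p) ⟨p.1, p.2, hp, rfl⟩
    simpa [A, hp, hp.symm, neg_root] using this
  · rintro ⟨A, hA, hsum⟩
    refine ⟨A.image root, ?_, ?_, (sum_image_root hA.ne_of_mem).trans hsum⟩
    · intro v hv
      obtain ⟨p, hp, rfl⟩ := mem_image.mp hv
      exact ⟨p.1, p.2, hA.ne_of_mem p hp, rfl⟩
    · rintro v ⟨i, j, hij, rfl⟩
      rw [show Pi.single i 1 - Pi.single j 1 = root (i, j) from rfl, neg_root,
        mem_image_root_iff hA.ne_of_mem hij, mem_image_root_iff hA.ne_of_mem hij.symm]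
      exact hA.mem_iff_swap_notMem (i, j) hij

theorem stmt_0 (l : ℕ) :
    (∃ S : Finset (Fin (l + 1) → ℝ),
      (∀ v ∈ S, v ∈ rootsA l) ∧
      (∀ v ∈ rootsA l, (v ∈ S ↔ -v ∉ S)) ∧
      ∑ v ∈ S, v = 0) ↔ Even l := by
  rw [exists_half_rootsA_sum_eq_zero_iff]
  constructor
  · rintro ⟨A, hA, hsum⟩
    have := hA.card_eq_two_mul_card_out_add_one hsum 0
    rw [Fintype.card_fin] at this
    exact ⟨#{j | (0, j) ∈ A}, by omega⟩
  · intro hl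
    obtain ⟨D, hD⟩ := exists_finset_fin_mem_iff_neg_notMem hl
    exact ⟨cayleyArcs D, isTournament_cayleyArcs hD, sum_root_cayleyArcs D⟩
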